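/- arXiv:1509.07819 — 2 statements merged into one kernel-verified Lean document; each statement's English description precedes it below -/
import Mathlib

section
/- Let R be a complete discrete valuation ring which is a local algebra over a field, and let τ : R → R be a ring automorphism with τ² = id. Then the fixed subring R^{τ=1} = {x ∈ R : τ(x) = x} is an integrally closed local domain; in particular, being Noetherian of Krull dimension one, it is a discrete valuation ring. -/
open IsDiscreteValuationRing

/-- Let `R` be a complete discrete valuation ring which is a local algebra over a
field, and `τ : R → R` a ring automorphism with `τ² = id`. Then the fixed subring
`R^{τ=1} = {x ∈ R | τ x = x}` is an integrally closed local domain; in particular, being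
Noetherian of Krull dimension one, it is a discrete valuation ring. -/
theorem fixed_subring_of_involution_is_dvr
    {K R : Type*} [Field K] [CommRing R] [IsDomain R] [Algebra K R]
    [IsDiscreteValuationRing R] [IsAdicComplete (IsLocalRing.maximalIdeal R) R]
    (τ : R ≃+* R) (hτ : ∀ x, τ (τ x) = x) :
    IsLocalRing ((τ : R →+* R).eqLocus (RingHom.id R)) ∧
    IsDomain ((τ : R →+* R).eqLocus (RingHom.id R)) ∧
    IsIntegrallyClosed ((τ : R →+* R).eqLocus (RingHom.id R)) ∧
    IsDiscreteValuationRing ((τ : R →+* R).eqLocus (RingHom.id R)) := by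
  classical
  set S := (τ : R →+* R).eqLocus (RingHom.id R) with hSdef
  have memS : ∀ x : R, x ∈ S ↔ τ x = x := fun x => Iff.rfl
  -- units of R lying in S are units of S
  have unitS : ∀ x : S, IsUnit (x : R) → IsUnit x := by
    intro x hx
    obtain ⟨y, hy⟩ := hx.exists_right_inv
    have hx0 : (x : R) ≠ 0 := by
      intro h; rw [h, zero_mul] at hy; exact zero_ne_one hy
    have hx2 : τ (x : R) = (x : R) := x.2
    have hτy : τ y = y := by
      have h1 : (x : R) * τ y = 1 := by
        have := congrArg τ hy
        rwa [map_mul, map_one, hx2] at this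
      exact mul_left_cancel₀ hx0 (h1.trans hy.symm)
    exact IsUnit.of_mul_eq_one (a := x) ⟨y, (memS y).mpr hτy⟩ (Subtype.ext hy)
  obtain ⟨π, hπ⟩ := exists_irreducible R
  set T : Set ℕ := {n | ∃ x : R, τ x = x ∧ addVal R x = (n : ℕ∞)} with hT
  -- T is closed under truncated subtraction
  have Tsub : ∀ m n, m ∈ T → n ∈ T → m ≤ n → (n - m) ∈ T := by
    rintro m n ⟨s, hs, hvs⟩ ⟨t, ht, hvt⟩ hmn
    have hs0 : s ≠ 0 := by
      intro h; rw [h, addVal_zero] at hvs; exact (WithTop.coe_ne_top hvs.symm).elim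
    have hdvd : s ∣ t := by
      rw [← addVal_le_iff_dvd, hvs, hvt]; exact_mod_cast hmn
    obtain ⟨r, hr⟩ := hdvd
    have hτr : τ r = r := by
      have h1 := congrArg τ hr
      rw [map_mul, hs, ht] at h1
      exact mul_left_cancel₀ hs0 (h1.symm.trans hr)
    refine ⟨r, hτr, ?_⟩
    have h2 : (n : ℕ∞) = (m : ℕ∞) + addVal R r := by
      rw [← hvs, ← hvt, hr, addVal_mul]
    have h3 : (m : ℕ∞) + ((n - m : ℕ) : ℕ∞) = (m : ℕ∞) + addVal R r := by
      rw [← h2, ← Nat.cast_add]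
      congr 1
      omega
    exact (WithTop.add_left_cancel (WithTop.coe_ne_top) h3).symm
  -- T contains a positive element
  have hπ0 : π ≠ 0 := hπ.ne_zero
  have hτπ0 : τ π ≠ 0 := by
    intro h
    exact hπ0 (by rw [← hτ π, h, map_zero])
  have hN0 : π * τ π ≠ 0 := mul_ne_zero hπ0 hτπ0
  have hNfix : τ (π * τ π) = π * τ π := by rw [map_mul, hτ, mul_comm]
  obtain ⟨n₀, hn₀0⟩ := WithTop.ne_top_iff_exists.mp (mt addVal_eq_top_iff.mp hN0)
  have hn₀ : addVal R (π * τ π) = ((n₀ : ℕ) : ℕ∞) := hn₀0.symm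
  have hn₀pos : 0 < n₀ := by
    rcases Nat.eq_zero_or_pos n₀ with h0 | h; swap
    · exact h
    exfalso
    have hdvd1 : (π * τ π) ∣ 1 := by
      rw [← addVal_le_iff_dvd, hn₀, addVal_one, h0]
      simp
    exact hπ.not_isUnit (isUnit_of_dvd_unit (dvd_mul_right π (τ π)) (isUnit_of_dvd_one hdvd1))
  have hex : ∃ n, 0 < n ∧ n ∈ T := ⟨n₀, hn₀pos, ⟨π * τ π, hNfix, hn₀⟩⟩
  set d := Nat.find hex with hddef
  have hd := Nat.find_spec hex
  -- every element of T is a multiple of d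
  have hdvdT : ∀ n, n ∈ T → d ∣ n := by
    intro n
    induction n using Nat.strong_induction_on with
    | _ n ih =>
      intro hn
      rcases Nat.eq_zero_or_pos n with h0 | hpos
      · simp [h0]
      · have hdn : d ≤ n := Nat.find_min' hex ⟨hpos, hn⟩
        have hmem := Tsub d n hd.2 hn hdn
        obtain ⟨k, hk⟩ := ih (n - d) (by omega) hmem
        exact ⟨k + 1, by rw [Nat.mul_succ]; omega⟩
  obtain ⟨π₀, hπ₀fix, hπ₀v⟩ := hd.2
  have hdpos := hd.1
  have hπ₀0 : π₀ ≠ 0 := by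
    intro h; rw [h, addVal_zero] at hπ₀v
    exact (WithTop.coe_ne_top hπ₀v.symm).elim
  set p : S := ⟨π₀, (memS π₀).mpr hπ₀fix⟩ with hpdef
  have hcoe_pow : ∀ k : ℕ, ((p ^ k : S) : R) = π₀ ^ k := fun k => by
    push_cast [hpdef]; rfl
  have hvpow : ∀ k : ℕ, addVal R (π₀ ^ k) = ((k * d : ℕ) : ℕ∞) := fun k => by
    rw [addVal_pow, hπ₀v, Nat.cast_mul]
    exact nsmul_eq_mul k _
  -- factorization
  have fact : ∀ x : S, x ≠ 0 → ∃ k : ℕ, Associated (p ^ k) x := by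
    intro x hx
    have hx0 : (x : R) ≠ 0 := fun h => hx (Subtype.ext h)
    obtain ⟨n, hn0⟩ := WithTop.ne_top_iff_exists.mp (mt addVal_eq_top_iff.mp hx0)
    have hn : addVal R (x : R) = ((n : ℕ) : ℕ∞) := hn0.symm
    obtain ⟨k, hk⟩ := hdvdT n ⟨x, x.2, hn⟩
    refine ⟨k, ?_⟩
    have hkd : k * d = n := by rw [hk, Nat.mul_comm]
    have hdvd : π₀ ^ k ∣ (x : R) := by
      rw [← addVal_le_iff_dvd, hvpow, hn]
      exact_mod_cast le_of_eq hkd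
    obtain ⟨r, hr⟩ := hdvd
    have hπ₀k0 : π₀ ^ k ≠ 0 := pow_ne_zero k hπ₀0
    have hx2 : τ (x : R) = (x : R) := x.2
    have hτr : τ r = r := by
      have h1 := congrArg τ hr
      rw [map_mul, map_pow, hπ₀fix, hx2] at h1
      exact mul_left_cancel₀ hπ₀k0 (h1.symm.trans hr)
    have hvr : addVal R r = 0 := by
      have h2 : (n : ℕ∞) = ((k * d : ℕ) : ℕ∞) + addVal R r := by
        rw [← hn, hr, addVal_mul, hvpow]
      rw [hkd] at h2
      have := WithTop.add_left_cancel (WithTop.coe_ne_top (a := n))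
        (h2.symm.trans (by rw [add_zero]) : (n : ℕ∞) + addVal R r = (n : ℕ∞) + 0)
      exact this
    have hru : IsUnit r := by
      refine isUnit_of_dvd_one ?_
      rw [← addVal_le_iff_dvd, hvr, addVal_one]
    have hruS : IsUnit (⟨r, (memS r).mpr hτr⟩ : S) := unitS _ hru
    obtain ⟨u, hu⟩ := hruS
    exact ⟨u, Subtype.ext (by rw [Subring.coe_mul, hcoe_pow, hu, ← hr])⟩
  -- p is irreducible in S
  have hirr : Irreducible p := by
    constructor
    · intro h
      have := h.map S.subtype
      have hπ₀u : IsUnit π₀ := by simpa [hpdef] using this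
      have h2 : addVal R π₀ ≤ addVal R 1 := addVal_le_iff_dvd.mpr hπ₀u.dvd
      rw [hπ₀v, addVal_one] at h2
      have h3 : Nat.find hex ≤ 0 := by exact_mod_cast h2
      omega
    · rintro a b hab
      have habR : π₀ = (a : R) * (b : R) := by
        have := congrArg (Subtype.val) hab
        simpa using this
      have ha0 : (a : R) ≠ 0 := by
        intro h; rw [h, zero_mul] at habR; exact hπ₀0 habR
      have hb0 : (b : R) ≠ 0 := by
        intro h; rw [h, mul_zero] at habR; exact hπ₀0 habR
      obtain ⟨m, hm0⟩ := WithTop.ne_top_iff_exists.mp (mt addVal_eq_top_iff.mp ha0)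
      have hm : addVal R (a : R) = ((m : ℕ) : ℕ∞) := hm0.symm
      obtain ⟨n, hn0⟩ := WithTop.ne_top_iff_exists.mp (mt addVal_eq_top_iff.mp hb0)
      have hn : addVal R (b : R) = ((n : ℕ) : ℕ∞) := hn0.symm
      have hsum : m + n = d := by
        have h1 : addVal R π₀ = addVal R (a : R) + addVal R (b : R) := by
          rw [habR, addVal_mul]
        rw [hπ₀v, hm, hn] at h1
        have h2 : Nat.find hex = m + n := by exact_mod_cast h1
        exact h2.symm
      obtain ⟨i, hi⟩ := hdvdT m ⟨a, a.2, hm⟩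
      obtain ⟨j, hj⟩ := hdvdT n ⟨b, b.2, hn⟩
      have hij : i + j = 1 := by
        refine Nat.eq_of_mul_eq_mul_left hdpos ?_
        rw [Nat.mul_add, Nat.mul_one, ← hi, ← hj]
        exact hsum
      have : m = 0 ∨ n = 0 := by
        rcases Nat.eq_zero_or_pos i with h | h
        · left; rw [h, Nat.mul_zero] at hi; exact hi
        · right
          have hj1 : j = 0 := by omega
          rw [hj1, Nat.mul_zero] at hj; exact hj
      rcases this with h | h
      · left
        refine unitS a (isUnit_of_dvd_one ?_)
        rw [← addVal_le_iff_dvd, hm, addVal_one, h]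
        simp
      · right
        refine unitS b (isUnit_of_dvd_one ?_)
        rw [← addVal_le_iff_dvd, hn, addVal_one, h]
        simp
  haveI hdvr : IsDiscreteValuationRing S :=
    IsDiscreteValuationRing.ofHasUnitMulPowIrreducibleFactorization
      ⟨p, hirr, fun {x} hx => fact x hx⟩
  exact ⟨inferInstance, inferInstance, inferInstance, inferInstance⟩
end

section
/- Let G be a group written as a disjoint union G = H ⊔ Ht for a subgroup H of index 2 and fixed t ∈ G, let ρ : H → GL_n(K) be a representation over a commutative ring K whose centralizer in M_n(K) consists only of scalars, and suppose there exists r(t) ∈ GL_n(K) with r(t)⁻¹ ρ(t h t⁻¹) r(t) = ρ(h) for all h ∈ H. Define r(h) = ρ(h) and r(ht) = ρ(h)r(t). Then the function 𝜚(t', t'') = r(t')r(t'')r(t't'')⁻¹ takes values in the scalar matrices K^× and defines a 2-cocycle on G/H ≅ Z/2 with values in K^× (trivial action). -/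
/-- Let `G = H ⊔ Ht` for a subgroup `H` of index `2` and a fixed `t ∈ G`, let
`ρ : H → GL_n(K)` be a representation over a commutative ring `K` whose centralizer in
`M_n(K)` consists only of scalars, and suppose there is `r(t) ∈ GL_n(K)` with
`r(t) ρ(h) r(t)⁻¹ = ρ(t h t⁻¹)` for all `h ∈ H`. Define `r(h) = ρ(h)` and
`r(h t) = ρ(h) r(t)`. Then `𝜚(a, b) = r(a) r(b) r(ab)⁻¹` takes values in the scalar matrices
`K^×`, is a 2-cocycle for the trivial action, and factors through `G/H ≅ ℤ/2`. -/
theorem index_two_extension_obstruction_cocycle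
    {G : Type*} [Group G] {n : ℕ} {K : Type*} [CommRing K]
    (H : Subgroup G) [hN : H.Normal] (hH : H.index = 2)
    (t : G) (ht : t ∉ H)
    (ρ : H →* GL (Fin n) K)
    (hschur : ∀ M : Matrix (Fin n) (Fin n) K,
      (∀ h : H, M * (ρ h : Matrix (Fin n) (Fin n) K) =
        (ρ h : Matrix (Fin n) (Fin n) K) * M) → ∃ c : K, M = c • (1 : Matrix (Fin n) (Fin n) K))
    (rt : GL (Fin n) K)
    (hrt : ∀ h : H, rt * ρ h * rt⁻¹ = ρ ⟨t * h * t⁻¹, hN.conj_mem h h.2 t⟩)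
    (r : G → GL (Fin n) K)
    (hr1 : ∀ (h : G) (hh : h ∈ H), r h = ρ ⟨h, hh⟩)
    (hr2 : ∀ (h : G) (hh : h ∈ H), r (h * t) = ρ ⟨h, hh⟩ * rt) :
    -- 𝜚 takes scalar values
    (∀ a b : G, ∃ u : Kˣ,
      ((r a * r b * (r (a * b))⁻¹ : GL (Fin n) K) : Matrix (Fin n) (Fin n) K)
        = (u : K) • (1 : Matrix (Fin n) (Fin n) K)) ∧
    -- 2-cocycle identity (trivial action)
    (∀ a b c : G,
      r a * r b * (r (a * b))⁻¹ * (r (a * b) * r c * (r (a * b * c))⁻¹)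
        = r b * r c * (r (b * c))⁻¹ * (r a * r (b * c) * (r (a * (b * c)))⁻¹)) ∧
    -- 𝜚 factors through G/H × G/H
    (∀ a b h h' : G, h ∈ H → h' ∈ H →
      r (h * a) * r (h' * b) * (r (h * a * (h' * b)))⁻¹
        = r a * r b * (r (a * b))⁻¹) := by
  -- every element of `G` is in `H` or of the form `h * t` with `h ∈ H`
  have hdecomp : ∀ g : G, g ∈ H ∨ ∃ h, h ∈ H ∧ g = h * t := by
    intro g
    by_cases hg : g ∈ H
    · exact Or.inl hg
    · have hti : t⁻¹ ∉ H := fun hmem => ht (by simpa using H.inv_mem hmem)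
      have : g * t⁻¹ ∈ H := (Subgroup.mul_mem_iff_of_index_two hH).2 (by simp [hg, hti])
      exact Or.inr ⟨g * t⁻¹, this, by group⟩
  -- `r` is multiplicative on `H`
  have hmulH : ∀ x y : G, x ∈ H → y ∈ H → r (x * y) = r x * r y := by
    intro x y hx hy
    rw [hr1 x hx, hr1 y hy, hr1 (x * y) (H.mul_mem hx hy), ← map_mul]
    rfl
  -- `r (x * a) = r x * r a` whenever `x ∈ H`
  have hmul_left : ∀ x a : G, x ∈ H → r (x * a) = r x * r a := by
    intro x a hx
    rcases hdecomp a with ha | ⟨h₁, hh₁, rfl⟩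
    · exact hmulH x a hx ha
    · rw [← mul_assoc, hr2 (x * h₁) (H.mul_mem hx hh₁), hr2 h₁ hh₁, hr1 x hx, ← mul_assoc,
        ← map_mul]
      rfl
  -- the swap lemma
  have hswap : ∀ g x : G, x ∈ H → r g * r x = r (g * x * g⁻¹) * r g := by
    intro g x hx
    rcases hdecomp g with hg | ⟨h₁, hh₁, rfl⟩
    · rw [← hmulH g x hg hx, ← hmulH _ g (hN.conj_mem x hx g) hg]
      exact congrArg r (by group)
    · have hg1 : rt * r x = r (t * x * t⁻¹) * rt := by
        rw [hr1 x hx, hr1 (t * x * t⁻¹) (hN.conj_mem x hx t)]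
        calc rt * ρ ⟨x, hx⟩ = rt * ρ ⟨x, hx⟩ * rt⁻¹ * rt := by group
          _ = ρ ⟨t * x * t⁻¹, hN.conj_mem x hx t⟩ * rt := by rw [hrt ⟨x, hx⟩]
      have hrg : r (h₁ * t) = r h₁ * rt := by rw [hr2 h₁ hh₁, hr1 h₁ hh₁]
      have cmem : h₁ * t * x * (h₁ * t)⁻¹ ∈ H := hN.conj_mem x hx (h₁ * t)
      calc r (h₁ * t) * r x = r h₁ * (rt * r x) := by rw [hrg]; group
        _ = r h₁ * r (t * x * t⁻¹) * rt := by rw [hg1]; group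
        _ = r (h₁ * (t * x * t⁻¹)) * rt := by rw [hmulH h₁ _ hh₁ (hN.conj_mem x hx t)]
        _ = r ((h₁ * t) * x * (h₁ * t)⁻¹ * h₁) * rt := by
              rw [congrArg r (show h₁ * (t * x * t⁻¹) = (h₁ * t) * x * (h₁ * t)⁻¹ * h₁ by group)]
        _ = r ((h₁ * t) * x * (h₁ * t)⁻¹) * (r h₁ * rt) := by
              rw [hmulH _ h₁ cmem hh₁]; group
        _ = r ((h₁ * t) * x * (h₁ * t)⁻¹) * r (h₁ * t) := by rw [hrg]
  -- inverse version of the swap lemma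
  have hswap_inv : ∀ g x : G, x ∈ H → (r g)⁻¹ * r x = r (g⁻¹ * x * g) * (r g)⁻¹ := by
    intro g x hx
    have m : g⁻¹ * x * g ∈ H := by simpa using hN.conj_mem x hx g⁻¹
    have h2 : r g * r (g⁻¹ * x * g) = r x * r g := by
      rw [hswap g _ m, congrArg r (show g * (g⁻¹ * x * g) * g⁻¹ = x by group)]
    calc (r g)⁻¹ * r x = (r g)⁻¹ * (r x * r g) * (r g)⁻¹ := by group
      _ = (r g)⁻¹ * (r g * r (g⁻¹ * x * g)) * (r g)⁻¹ := by rw [h2]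
      _ = r (g⁻¹ * x * g) * (r g)⁻¹ := by group
  -- scalar elements of GL are central
  have hcen : ∀ F M : GL (Fin n) K,
      (∃ u : Kˣ, (F : Matrix (Fin n) (Fin n) K) = (u : K) • (1 : Matrix (Fin n) (Fin n) K)) →
      F * M = M * F := by
    rintro F M ⟨u, hu⟩
    refine Units.ext ?_
    simp only [Units.val_mul, hu, smul_mul_assoc, mul_smul_comm, one_mul, mul_one]
  -- the scalar-value claim
  have hscal : ∀ a b : G, ∃ u : Kˣ,
      ((r a * r b * (r (a * b))⁻¹ : GL (Fin n) K) : Matrix (Fin n) (Fin n) K)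
        = (u : K) • (1 : Matrix (Fin n) (Fin n) K) := by
    intro a b
    have hFcomm : ∀ x : G, x ∈ H →
        (r a * r b * (r (a * b))⁻¹) * r x = r x * (r a * r b * (r (a * b))⁻¹) := by
      intro x hx
      have m1 : (a * b)⁻¹ * x * (a * b) ∈ H := by simpa using hN.conj_mem x hx (a * b)⁻¹
      have m2 : b * ((a * b)⁻¹ * x * (a * b)) * b⁻¹ ∈ H := hN.conj_mem _ m1 b
      have e1 : (r (a * b))⁻¹ * r x = r ((a * b)⁻¹ * x * (a * b)) * (r (a * b))⁻¹ :=
        hswap_inv _ _ hx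
      have e2 : r b * r ((a * b)⁻¹ * x * (a * b))
          = r (b * ((a * b)⁻¹ * x * (a * b)) * b⁻¹) * r b := hswap _ _ m1
      have e3 : r a * r (b * ((a * b)⁻¹ * x * (a * b)) * b⁻¹)
          = r (a * (b * ((a * b)⁻¹ * x * (a * b)) * b⁻¹) * a⁻¹) * r a := hswap _ _ m2
      have e4 : a * (b * ((a * b)⁻¹ * x * (a * b)) * b⁻¹) * a⁻¹ = x := by group
      calc (r a * r b * (r (a * b))⁻¹) * r x
          = r a * (r b * ((r (a * b))⁻¹ * r x)) := by group
        _ = r a * (r b * (r ((a * b)⁻¹ * x * (a * b)) * (r (a * b))⁻¹)) := by rw [e1]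
        _ = r a * ((r b * r ((a * b)⁻¹ * x * (a * b))) * (r (a * b))⁻¹) := by group
        _ = r a * ((r (b * ((a * b)⁻¹ * x * (a * b)) * b⁻¹) * r b) * (r (a * b))⁻¹) := by
              rw [e2]
        _ = (r a * r (b * ((a * b)⁻¹ * x * (a * b)) * b⁻¹)) * (r b * (r (a * b))⁻¹) := by
              group
        _ = (r (a * (b * ((a * b)⁻¹ * x * (a * b)) * b⁻¹) * a⁻¹) * r a) *
              (r b * (r (a * b))⁻¹) := by rw [e3]
        _ = r x * (r a * r b * (r (a * b))⁻¹) := by rw [e4]; group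
    have hcommM : ∀ h : H,
        ((r a * r b * (r (a * b))⁻¹ : GL (Fin n) K) : Matrix (Fin n) (Fin n) K) *
          (ρ h : Matrix (Fin n) (Fin n) K)
        = (ρ h : Matrix (Fin n) (Fin n) K) *
          ((r a * r b * (r (a * b))⁻¹ : GL (Fin n) K) : Matrix (Fin n) (Fin n) K) := by
      intro h
      have h2 := congrArg Units.val (hFcomm (h : G) h.2)
      rw [hr1 (h : G) h.2] at h2
      simpa using h2
    obtain ⟨c, hc⟩ := hschur _ hcommM
    rcases Nat.eq_zero_or_pos n with hn | hn
    · subst hn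
      exact ⟨1, by ext i j; exact i.elim0⟩
    · have hinv : ((r a * r b * (r (a * b))⁻¹ : GL (Fin n) K) : Matrix (Fin n) (Fin n) K) *
          (((r a * r b * (r (a * b))⁻¹)⁻¹ : GL (Fin n) K) : Matrix (Fin n) (Fin n) K) = 1 :=
        Units.mul_inv _
      rw [hc, smul_mul_assoc, one_mul] at hinv
      have h3 : (c • (((r a * r b * (r (a * b))⁻¹)⁻¹ : GL (Fin n) K) :
            Matrix (Fin n) (Fin n) K)) ⟨0, hn⟩ ⟨0, hn⟩
          = (1 : Matrix (Fin n) (Fin n) K) ⟨0, hn⟩ ⟨0, hn⟩ := by rw [hinv]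
      have h4 : c * ((((r a * r b * (r (a * b))⁻¹)⁻¹ : GL (Fin n) K) :
          Matrix (Fin n) (Fin n) K) ⟨0, hn⟩ ⟨0, hn⟩) = 1 := by
        simpa using h3
      exact ⟨(IsUnit.of_mul_eq_one _ h4).unit, by rw [hc, IsUnit.unit_spec]⟩
  refine ⟨hscal, ?_, ?_⟩
  · -- 2-cocycle identity
    intro a b c
    have hc1 : (r b * r c * (r (b * c))⁻¹) * r a = r a * (r b * r c * (r (b * c))⁻¹) :=
      hcen _ (r a) (hscal b c)
    rw [mul_assoc a b c]
    calc r a * r b * (r (a * b))⁻¹ * (r (a * b) * r c * (r (a * (b * c)))⁻¹)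
        = r a * (r b * r c * (r (b * c))⁻¹) * (r (b * c) * (r (a * (b * c)))⁻¹) := by group
      _ = (r b * r c * (r (b * c))⁻¹) * r a * (r (b * c) * (r (a * (b * c)))⁻¹) := by
            rw [hc1]
      _ = r b * r c * (r (b * c))⁻¹ * (r a * r (b * c) * (r (a * (b * c)))⁻¹) := by group
  · -- factors through G/H × G/H
    intro a b h h' hh hh'
    have m1 : a * h' * a⁻¹ ∈ H := hN.conj_mem h' hh' a
    have key : h * a * (h' * b) = (h * (a * h' * a⁻¹)) * (a * b) := by group
    have e1 : r (h * a) = r h * r a := hmul_left h a hh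
    have e2 : r (h' * b) = r h' * r b := hmul_left h' b hh'
    have e3 : r (h * a * (h' * b)) = r h * (r (a * h' * a⁻¹) * r (a * b)) := by
      rw [key, hmul_left _ _ (H.mul_mem hh m1), hmulH _ _ hh m1, mul_assoc]
    have e4 : r a * r h' = r (a * h' * a⁻¹) * r a := hswap a h' hh'
    have hconjF : ∀ M : GL (Fin n) K,
        M * (r a * r b * (r (a * b))⁻¹) * M⁻¹ = r a * r b * (r (a * b))⁻¹ := by
      intro M
      rw [mul_assoc, hcen _ M⁻¹ (hscal a b)]
      group
    calc r (h * a) * r (h' * b) * (r (h * a * (h' * b)))⁻¹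
        = r h * ((r a * r h') * (r b * ((r (a * b))⁻¹ * ((r (a * h' * a⁻¹))⁻¹ * (r h)⁻¹)))) := by
          rw [e1, e2, e3]; group
      _ = r h * ((r (a * h' * a⁻¹) * r a) * (r b * ((r (a * b))⁻¹ *
            ((r (a * h' * a⁻¹))⁻¹ * (r h)⁻¹)))) := by rw [e4]
      _ = (r h * r (a * h' * a⁻¹)) * (r a * r b * (r (a * b))⁻¹) *
            (r h * r (a * h' * a⁻¹))⁻¹ := by group
      _ = r a * r b * (r (a * b))⁻¹ := hconjF _
end
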